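/- Let n ≥ 2, let a ∈ ℝ, let w : {1,…,n} → ℝ be nonnegative weights with Σ_{i=1}^n w_i = 1, and let ψ : {1,…,n} → ℝ satisfy |ψ(r+1) − ψ(r)| ≤ C·r^{−1} for all integers 1 ≤ r ≤ n−1, where C ≥ 0. For each permutation π of {1,…,n} define q_π = σ(a + Σ_{i=1}^n w_i·ψ(π(i))), and let q̄ be the average of q_π over all n! permutations. Then E_π|q_π − q̄| ≤ (C/4)·H_{n−1}, where the expectation is the uniform average over all permutations. In particular the permutation-induced dispersion is O(log n). -/

import Mathlib

/-- The logistic (sigmoid) function `σ(t) = 1 / (1 + e^{-t})`. -/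
noncomputable def logistic (t : ℝ) : ℝ := 1 / (1 + Real.exp (-t))

/-- The `m`-th harmonic number `H_m = ∑_{k=1}^m 1/k`, with `H_0 = 0`. -/
noncomputable def harmonicR (m : ℕ) : ℝ := ∑ k ∈ Finset.range m, 1 / ((k : ℝ) + 1)

/-- The prediction under permutation `π`: `q_π = σ(a + ∑_i w_i·ψ(pos_π(i)))`, where the
position of chunk `i` in `{1,…,n}` is encoded as `(π i : ℕ) + 1`. -/
noncomputable def qperm (n : ℕ) (a : ℝ) (w : Fin n → ℝ) (ψ : ℕ → ℝ)
    (π : Equiv.Perm (Fin n)) : ℝ :=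
  logistic (a + ∑ i : Fin n, w i * ψ ((π i : ℕ) + 1))

/-!
Every `q_π` is `σ` applied to a convex combination of values `ψ(1), …, ψ(n)`. Since
`σ' = σ(1 - σ) ≤ 1/4`, any two `q_π` differ by at most a quarter of the oscillation of `ψ` on
`{1, …, n}`, which is bounded by its total variation `∑_{r<n} |ψ(r+1) - ψ(r)| ≤ C·H_{n-1}`.
A quantity whose values lie pairwise within `D` of each other deviates from its mean by at
most `D`, so the mean absolute deviation is at most `(C/4)·H_{n-1}`.
-/

open Finset
open scoped BigOperators

namespace Real

lemma sigmoid_mul_one_sub_sigmoid_le (x : ℝ) : sigmoid x * (1 - sigmoid x) ≤ 4⁻¹ := by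
  nlinarith [sq_nonneg (sigmoid x - 2⁻¹)]

lemma abs_sigmoid_sub_le (x y : ℝ) : |sigmoid x - sigmoid y| ≤ 4⁻¹ * |x - y| := by
  refine convex_univ.norm_image_sub_le_of_norm_deriv_le
    (fun z _ => (hasDerivAt_sigmoid z).differentiableAt) (fun z _ => ?_)
    (Set.mem_univ _) (Set.mem_univ _)
  rw [deriv_sigmoid, Real.norm_eq_abs,
    abs_of_nonneg (mul_nonneg (sigmoid_nonneg z) (sub_nonneg.2 (sigmoid_le_one z)))]
  exact sigmoid_mul_one_sub_sigmoid_le z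

end Real

lemma logistic_eq_sigmoid : logistic = Real.sigmoid := by
  funext t
  rw [logistic, Real.sigmoid_def, one_div]

lemma dist_le_Ico_sum_dist_of_mem_Icc {α : Type*} [PseudoMetricSpace α] (f : ℕ → α)
    {a b r s : ℕ} (hr : r ∈ Icc a b) (hs : s ∈ Icc a b) :
    dist (f r) (f s) ≤ ∑ k ∈ Ico a b, dist (f k) (f (k + 1)) := by
  wlog hrs : r ≤ s generalizing r s
  · rw [dist_comm]
    exact this hs hr (le_of_not_ge hrs)
  rw [mem_Icc] at hr hs
  refine (dist_le_Ico_sum_dist f hrs).trans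
    (sum_le_sum_of_subset_of_nonneg (Ico_subset_Ico hr.1 hs.2) fun _ _ _ => dist_nonneg)

lemma sum_Ico_one_inv_eq_harmonicR (n : ℕ) :
    ∑ k ∈ Ico 1 n, ((k : ℝ))⁻¹ = harmonicR (n - 1) := by
  rw [sum_Ico_eq_sum_range, harmonicR]
  refine sum_congr rfl fun k _ => ?_
  push_cast
  ring

lemma abs_sub_le_mul_harmonicR {n : ℕ} {C : ℝ} {ψ : ℕ → ℝ}
    (hreg : ∀ r : ℕ, 1 ≤ r → r ≤ n - 1 → |ψ (r + 1) - ψ r| ≤ C * ((r : ℝ))⁻¹)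
    {r s : ℕ} (hr : r ∈ Icc 1 n) (hs : s ∈ Icc 1 n) :
    |ψ s - ψ r| ≤ C * harmonicR (n - 1) := by
  calc |ψ s - ψ r| = dist (ψ r) (ψ s) := by rw [Real.dist_eq, abs_sub_comm]
    _ ≤ ∑ k ∈ Ico 1 n, dist (ψ k) (ψ (k + 1)) := dist_le_Ico_sum_dist_of_mem_Icc ψ hr hs
    _ ≤ ∑ k ∈ Ico 1 n, C * ((k : ℝ))⁻¹ := by
      refine sum_le_sum fun k hk => ?_
      rw [mem_Ico] at hk
      rw [Real.dist_eq, abs_sub_comm]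
      exact hreg k hk.1 (Nat.le_sub_one_of_lt hk.2)
    _ = C * harmonicR (n - 1) := by rw [← mul_sum, sum_Ico_one_inv_eq_harmonicR]

lemma abs_sum_mul_sub_sum_mul_le {ι : Type*} [Fintype ι] {w x y : ι → ℝ} {D : ℝ}
    (hw0 : ∀ i, 0 ≤ w i) (hw1 : ∑ i, w i = 1) (hxy : ∀ i, |x i - y i| ≤ D) :
    |∑ i, w i * x i - ∑ i, w i * y i| ≤ D := by
  calc |∑ i, w i * x i - ∑ i, w i * y i| = |∑ i, w i * (x i - y i)| := by
        simp only [mul_sub, sum_sub_distrib]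
    _ ≤ ∑ i, w i * |x i - y i| := by
        refine (abs_sum_le_sum_abs _ _).trans_eq (sum_congr rfl fun i _ => ?_)
        rw [abs_mul, abs_of_nonneg (hw0 i)]
    _ ≤ ∑ i, w i * D := sum_le_sum fun i _ => mul_le_mul_of_nonneg_left (hxy i) (hw0 i)
    _ = D := by rw [← sum_mul, hw1, one_mul]

lemma expect_abs_sub_expect_le {ι : Type*} [Fintype ι] [Nonempty ι] {f : ι → ℝ} {D : ℝ}
    (hf : ∀ i j, |f i - f j| ≤ D) : 𝔼 i, |f i - 𝔼 j, f j| ≤ D := by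
  refine expect_le univ_nonempty fun i _ => ?_
  calc |f i - 𝔼 j, f j| = |𝔼 j, (f i - f j)| := by
        rw [expect_sub_distrib, expect_const univ_nonempty]
    _ ≤ 𝔼 j, |f i - f j| := abs_expect_le _ _
    _ ≤ D := expect_le univ_nonempty fun j _ => hf i j

theorem qmv_harmonic_general (n : ℕ) (a : ℝ) (C : ℝ)
    (w : Fin n → ℝ) (hw0 : ∀ i, 0 ≤ w i) (hw1 : ∑ i, w i = 1) (ψ : ℕ → ℝ)
    (hreg : ∀ r : ℕ, 1 ≤ r → r ≤ n - 1 → |ψ (r + 1) - ψ r| ≤ C * ((r : ℝ))⁻¹) :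
    (1 / (Nat.factorial n : ℝ)) *
        ∑ π : Equiv.Perm (Fin n),
          |qperm n a w ψ π -
            (1 / (Nat.factorial n : ℝ)) * ∑ π' : Equiv.Perm (Fin n), qperm n a w ψ π'| ≤
      (C / 4) * harmonicR (n - 1) := by
  have hpos : ∀ (π : Equiv.Perm (Fin n)) i, (π i : ℕ) + 1 ∈ Icc 1 n := fun π i =>
    mem_Icc.2 ⟨Nat.le_add_left 1 _, (π i).isLt⟩
  have hspread :
      ∀ π π', |qperm n a w ψ π - qperm n a w ψ π'| ≤ C / 4 * harmonicR (n - 1) := by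
    intro π π'
    simp only [qperm, logistic_eq_sigmoid]
    refine (Real.abs_sigmoid_sub_le _ _).trans ?_
    rw [add_sub_add_left_eq_sub, div_eq_inv_mul, mul_assoc]
    exact mul_le_mul_of_nonneg_left (abs_sum_mul_sub_sum_mul_le hw0 hw1 fun i =>
      abs_sub_le_mul_harmonicR hreg (hpos π' i) (hpos π i)) (by norm_num)
  have hmean :
      ∀ g : Equiv.Perm (Fin n) → ℝ, 1 / (n.factorial : ℝ) * ∑ π, g π = 𝔼 π, g π := by
    intro g
    rw [Fintype.expect_eq_sum_div_card, Fintype.card_perm, Fintype.card_fin,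
      one_div_mul_eq_div]
  simp_rw [hmean]
  exact expect_abs_sub_expect_le hspread

/-- **Quantified Martingale Violation, harmonic decay (α = 1).**
Under the first-order positional sensitivity model with `(1, C)`-regular potential `ψ`,
the permutation-induced dispersion satisfies `E_π|q_π − q̄| ≤ (C/4)·H_{n−1} = O(log n)`. -/
theorem qmv_harmonic (n : ℕ) (hn : 2 ≤ n) (a : ℝ) (C : ℝ) (hC : 0 ≤ C)
    (w : Fin n → ℝ) (hw0 : ∀ i, 0 ≤ w i) (hw1 : ∑ i, w i = 1) (ψ : ℕ → ℝ)
    (hreg : ∀ r : ℕ, 1 ≤ r → r ≤ n - 1 → |ψ (r + 1) - ψ r| ≤ C * ((r : ℝ))⁻¹) :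
    (1 / (Nat.factorial n : ℝ)) *
        ∑ π : Equiv.Perm (Fin n),
          |qperm n a w ψ π -
            (1 / (Nat.factorial n : ℝ)) * ∑ π' : Equiv.Perm (Fin n), qperm n a w ψ π'| ≤
      (C / 4) * harmonicR (n - 1) :=
  qmv_harmonic_general n a C w hw0 hw1 ψ hreg
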